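/- arXiv:1403.3824 — 7 statements merged into one kernel-verified Lean document; each statement's English description precedes it below -/
import Mathlib

section
/- Let C₀ = [[α, β],[γ, δ]] be a 2×2 matrix such that there exists a unitary 3×3 matrix of the form [[α, r, β],[q, g, s],[γ, t, δ]] with g ∈ [0,1]. Then the matrix K² = [[|α|²+|γ|², \bar{α}β+\bar{γ}δ],[\bar{β}α+\bar{δ}γ, |β|²+|δ|²]] = C₀*C₀ satisfies det(C₀*C₀) = g² and tr(C₀*C₀) = 1 + g², hence σ(C₀*C₀) = {1, g²}. -/
/-- If C₀ = [[α,β],[γ,δ]] extends to a 3×3 unitary [[α,r,β],[q,g,s],[γ,t,δ]]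
with g ∈ [0,1], then det(C₀*C₀) = g², tr(C₀*C₀) = 1+g², and σ(C₀*C₀) = {1,g²}. -/
theorem stmt_2 (α β γ δ r q s t : ℂ) (g : ℝ) (hg0 : 0 ≤ g) (hg1 : g ≤ 1)
    (hU : Matrix.of ![![α, r, β], ![q, (g : ℂ), s], ![γ, t, δ]]
      ∈ Matrix.unitaryGroup (Fin 3) ℂ) :
    (Matrix.conjTranspose !![α, β; γ, δ] * !![α, β; γ, δ]).det = (g : ℂ)^2 ∧
    (Matrix.conjTranspose !![α, β; γ, δ] * !![α, β; γ, δ]).trace = 1 + (g : ℂ)^2 ∧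
    spectrum ℂ (Matrix.conjTranspose !![α, β; γ, δ] * !![α, β; γ, δ]) = {1, (g : ℂ)^2} := by
  have hA := Matrix.mem_unitaryGroup_iff'.mp hU
  have hB := Matrix.mem_unitaryGroup_iff.mp hU
  have h1 := congrFun (congrFun hA 0) 0
  have h2 := congrFun (congrFun hA 2) 2
  have h3 := congrFun (congrFun hA 0) 2
  have h5 := congrFun (congrFun hA 2) 0
  have h4 := congrFun (congrFun hB 1) 1
  simp [Matrix.mul_apply, Fin.sum_univ_three, Matrix.one_apply,
    Matrix.conjTranspose_apply] at h1 h2 h3 h4 h5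
  set K := Matrix.conjTranspose !![α, β; γ, δ] * !![α, β; γ, δ] with hK
  have hdet : K.det = (g : ℂ)^2 := by
    rw [Matrix.det_fin_two]
    simp [hK, Matrix.mul_apply, Fin.sum_univ_two, Matrix.conjTranspose_apply]
    linear_combination ((starRingEnd ℂ) β * β + (starRingEnd ℂ) δ * δ) * h1 +
      (1 - (starRingEnd ℂ) q * q) * h2 -
      ((starRingEnd ℂ) β * α + (starRingEnd ℂ) δ * γ) * h3 +
      (starRingEnd ℂ) q * s * h5 - h4
  have htr : K.trace = 1 + (g : ℂ)^2 := by
    rw [Matrix.trace_fin_two]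
    simp [hK, Matrix.mul_apply, Fin.sum_univ_two, Matrix.conjTranspose_apply]
    linear_combination h1 + h2 - h4
  refine ⟨hdet, htr, ?_⟩
  have key : ∀ x : ℂ, (algebraMap ℂ (Matrix (Fin 2) (Fin 2) ℂ) x - K).det
      = (x - 1) * (x - (g : ℂ)^2) := by
    intro x
    have e1 := hdet
    have e2 := htr
    rw [Matrix.det_fin_two] at e1 ⊢
    rw [Matrix.trace_fin_two] at e2
    simp only [Matrix.sub_apply, Matrix.algebraMap_matrix_apply, if_pos, if_neg,
      Fin.zero_eq_one_iff, Fin.one_eq_zero_iff, Nat.succ_ne_self, ite_true, ite_false,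
      OfNat.ofNat_ne_one, one_ne_zero, zero_ne_one, reduceIte, Algebra.algebraMap_self,
      RingHom.id_apply]
    linear_combination e1 - x * e2
  ext x
  simp only [spectrum.mem_iff, Set.mem_insert_iff, Set.mem_singleton_iff,
    Matrix.isUnit_iff_isUnit_det, isUnit_iff_ne_zero, not_ne_iff, key x, mul_eq_zero,
    sub_eq_zero]
end

section
/- Let C₀ = [[α, β],[γ, δ]] be a 2×2 matrix extendable to a 3×3 unitary [[α, r, β],[q, g, s],[γ, t, δ]] with g ∈ [0,1]. Then |det C₀| = |αδ − βγ| = g. -/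
/-- If C₀ = [[α,β],[γ,δ]] extends to a 3×3 unitary [[α,r,β],[q,g,s],[γ,t,δ]]
with g ∈ [0,1], then |det C₀| = |αδ − βγ| = g. -/
theorem stmt_3 (α β γ δ r q s t : ℂ) (g : ℝ) (hg0 : 0 ≤ g) (hg1 : g ≤ 1)
    (hU : Matrix.of ![![α, r, β], ![q, (g : ℂ), s], ![γ, t, δ]]
      ∈ Matrix.unitaryGroup (Fin 3) ℂ) :
    ‖α * δ - β * γ‖ = g := by
  set M : Matrix (Fin 3) (Fin 3) ℂ := Matrix.of ![![α, r, β], ![q, (g : ℂ), s], ![γ, t, δ]] with hM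
  have h1 : star M * M = 1 := hU.1
  have h2 : M * star M = 1 := hU.2
  have hdetabs : ‖M.det‖ = 1 := by
    have hd : star M.det * M.det = 1 := by
      simpa [Matrix.star_eq_conjTranspose, Matrix.det_conjTranspose] using
        congrArg Matrix.det h1
    have h := congrArg (‖·‖) hd
    rw [norm_mul, norm_one] at h
    have hs : ‖star M.det‖ = ‖M.det‖ := norm_star _
    rw [hs] at h
    nlinarith [norm_nonneg M.det]
  have hadj : M.adjugate = M.det • star M := by
    calc M.adjugate = M.adjugate * (M * star M) := by rw [h2, mul_one]
    _ = (M.adjugate * M) * star M := by rw [mul_assoc]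
    _ = (M.det • (1 : Matrix (Fin 3) (Fin 3) ℂ)) * star M := by rw [Matrix.adjugate_mul]
    _ = M.det • star M := by rw [Matrix.smul_mul, one_mul]
  have hentry : M.adjugate 1 1 = α * δ - β * γ := by
    rw [Matrix.adjugate_fin_three]
    simp [hM]
  have hentry2 : (M.det • star M) 1 1 = M.det * (g : ℂ) := by
    simp [hM, Matrix.conjTranspose_apply]
  have heq : α * δ - β * γ = M.det * (g : ℂ) := by
    rw [← hentry, hadj, hentry2]
  have h := congrArg (‖·‖) heq
  rwa [norm_mul, hdetabs, one_mul, Complex.norm_real, Real.norm_eq_abs, abs_of_nonneg hg0] at h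
end

section
/- Let A and B be bounded normal operators on a Hilbert space H with B boundedly invertible, and let τ ∈ ρ(A) (the resolvent set of A). If z ∈ ℂ satisfies |z − τb| < |b| · dist(τ, σ(A)) for every b ∈ σ(B), then z belongs to the resolvent set of AB, i.e., AB − z is boundedly invertible. -/
/-- For bounded normal operators A, B with B boundedly invertible, τ in the
resolvent set of A, and z with |z − τb| < |b|·dist(τ, σ(A)) for every
b ∈ σ(B), the point z is in the resolvent set of AB. -/
theorem stmt_4 {H : Type*} [NormedAddCommGroup H] [InnerProductSpace ℂ H]
    [CompleteSpace H] (A B : H →L[ℂ] H)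
    (hA : IsStarNormal A) (hB : IsStarNormal B) (hBinv : IsUnit B)
    (τ : ℂ) (hτ : τ ∉ spectrum ℂ A) (z : ℂ)
    (hz : ∀ b ∈ spectrum ℂ B,
      ‖z - τ * b‖ < ‖b‖ * Metric.infDist τ (spectrum ℂ A)) :
    z ∉ spectrum ℂ (A * B) := by
  rcases subsingleton_or_nontrivial H with hs | hs
  · exact spectrum.notMem_iff.mpr (isUnit_of_subsingleton _)
  have h0B : (0 : ℂ) ∉ spectrum ℂ B := spectrum.zero_notMem ℂ hBinv
  set d : ℝ := Metric.infDist τ (spectrum ℂ A) with hd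
  have hdpos : 0 < d :=
    ((spectrum.isClosed A).notMem_iff_infDist_pos (spectrum.nonempty A)).mp hτ
  have hτA : ∀ a ∈ spectrum ℂ A, τ - a ≠ 0 := by
    intro a ha h
    exact hτ (by rwa [sub_eq_zero.mp h])
  have hBne : ∀ b ∈ spectrum ℂ B, b ≠ 0 := fun b hb hb0 => h0B (hb0 ▸ hb)
  set f : ℂ → ℂ := fun b => (τ * b - z) * b⁻¹ with hf
  set g : ℂ → ℂ := fun a => (τ - a)⁻¹ with hg
  have hgc : ContinuousOn g (spectrum ℂ A) :=
    ContinuousOn.inv₀ (by fun_prop) hτA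
  have hfc : ContinuousOn f (spectrum ℂ B) :=
    ContinuousOn.mul (by fun_prop) (ContinuousOn.inv₀ continuousOn_id hBne)
  set R : H →L[ℂ] H := cfc g A with hR
  set D : H →L[ℂ] H := cfc f B with hD
  have hsm : τ • (1 : H →L[ℂ] H) - A = cfc (fun a : ℂ => τ - a) A := by
    rw [cfc_sub _ _ A (by fun_prop) (by fun_prop), cfc_const τ A, cfc_id' ℂ A,
      Algebra.algebraMap_eq_smul_one]
  have hR1 : (τ • (1 : H →L[ℂ] H) - A) * R = 1 := by
    rw [hsm, hR, ← cfc_mul _ _ A (by fun_prop) hgc,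
      cfc_congr (g := fun _ => (1 : ℂ)) (fun a ha => mul_inv_cancel₀ (hτA a ha)),
      cfc_const_one ℂ A]
  have hDB : D * B = τ • B - z • (1 : H →L[ℂ] H) := by
    have h2 : D * B = cfc (fun b : ℂ => f b * b) B := by
      rw [hD, cfc_mul f _ B hfc (by fun_prop), cfc_id' ℂ B]
    rw [h2, cfc_congr (g := fun b : ℂ => τ * b - z)
      (fun b hb => by simp [hf, mul_assoc, inv_mul_cancel₀ (hBne b hb)]),
      cfc_sub _ _ B (by fun_prop) (by fun_prop), cfc_const z B,
      cfc_const_mul_id τ B, Algebra.algebraMap_eq_smul_one]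
  have hRn : ‖R‖ ≤ d⁻¹ := by
    apply norm_cfc_le (by positivity)
    intro a ha
    have hle : d ≤ ‖τ - a‖ := by
      simpa [dist_eq_norm] using Metric.infDist_le_dist_of_mem ha
    rw [hg, norm_inv]
    exact inv_anti₀ hdpos hle
  have hDn : ‖D‖ < d := by
    obtain ⟨b₀, hb₀, hmax⟩ := (spectrum.isCompact B).exists_isMaxOn (spectrum.nonempty B)
      (continuous_norm.comp_continuousOn hfc)
    have h3 : ‖D‖ ≤ ‖f b₀‖ := norm_cfc_le (norm_nonneg _) fun b hb => hmax hb
    refine h3.trans_lt ?_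
    have hb0 : (0 : ℝ) < ‖b₀‖ := by
      simpa [norm_pos_iff] using hBne b₀ hb₀
    have hzb := hz b₀ hb₀
    rw [hf]
    simp only [norm_mul, norm_inv]
    rw [← norm_neg (τ * b₀ - z), neg_sub, ← div_eq_mul_inv,
      div_lt_iff₀ hb0]
    linarith [hzb, mul_comm d ‖b₀‖]
  have hU : IsUnit (1 - R * D) := by
    have hlt : ‖R * D‖ < 1 := by
      calc ‖R * D‖ ≤ ‖R‖ * ‖D‖ := norm_mul_le _ _
        _ ≤ d⁻¹ * ‖D‖ := mul_le_mul_of_nonneg_right hRn (norm_nonneg _)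
        _ < d⁻¹ * d := mul_lt_mul_of_pos_left hDn (by positivity)
        _ = 1 := inv_mul_cancel₀ hdpos.ne'
    exact (Units.oneSub _ hlt).isUnit
  have hτU : IsUnit (τ • (1 : H →L[ℂ] H) - A) := by
    rw [← Algebra.algebraMap_eq_smul_one]
    exact spectrum.notMem_iff.mp hτ
  rw [spectrum.notMem_iff, Algebra.algebraMap_eq_smul_one]
  have key : z • (1 : H →L[ℂ] H) - A * B = ((τ • 1 - A) * (1 - R * D)) * B := by
    have expand : (τ • (1 : H →L[ℂ] H) - A) * (1 - R * D) = (τ • 1 - A) - D := by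
      rw [mul_sub, mul_one, ← mul_assoc, hR1, one_mul]
    rw [expand, sub_mul, sub_mul, hDB, smul_mul_assoc, one_mul]
    abel
  rw [key]
  exact (hτU.mul hU).mul hBinv
end

section
/- Let U be a unitary operator on H, P₀ an orthogonal projection, and T = P₀ U P₀ restricted to P₀H. Suppose e^{iθ} is an approximate eigenvalue of T but not an eigenvalue of T. Then e^{iθ} is an approximate eigenvalue of U, i.e., there exists a sequence of unit vectors φₙ with Uφₙ − e^{iθ}φₙ → 0. -/
set_option maxHeartbeats 400000


/-- Let U be unitary, P₀ an orthogonal projection, and T = P₀UP₀ restricted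
to P₀H. If e^{iθ} is an approximate eigenvalue of T but not an eigenvalue of
T, then e^{iθ} is an approximate eigenvalue of U: there are unit vectors φₙ
with Uφₙ − e^{iθ}φₙ → 0. -/
theorem stmt_10 {H : Type*} [NormedAddCommGroup H] [InnerProductSpace ℂ H]
    [CompleteSpace H] (U P₀ : H →L[ℂ] H)
    (hU : U ∈ unitary (H →L[ℂ] H))
    (hP₀sa : IsSelfAdjoint P₀) (hP₀idem : IsIdempotentElem P₀)
    (θ : ℝ)
    (happ : ∃ φ : ℕ → H, (∀ n, P₀ (φ n) = φ n) ∧ (∀ n, ‖φ n‖ = 1) ∧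
      Filter.Tendsto
        (fun n => ‖P₀ (U (φ n)) - Complex.exp (θ * Complex.I) • φ n‖)
        Filter.atTop (nhds 0))
    (hnotev : ∀ φ : H, P₀ φ = φ →
      P₀ (U φ) = Complex.exp (θ * Complex.I) • φ → φ = 0) :
    ∃ ψ : ℕ → H, (∀ n, ‖ψ n‖ = 1) ∧
      Filter.Tendsto
        (fun n => ‖U (ψ n) - Complex.exp (θ * Complex.I) • ψ n‖)
        Filter.atTop (nhds 0) := by
  obtain ⟨φ, hPφ, hφnorm, htend⟩ := happ
  set e : ℂ := Complex.exp (θ * Complex.I) with he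
  have habs : ‖e‖ = 1 := by
    rw [he]; exact Complex.norm_exp_ofReal_mul_I θ
  refine ⟨φ, hφnorm, ?_⟩
  -- notation
  set a : ℕ → ℝ := fun n => ‖P₀ (U (φ n)) - e • φ n‖ with ha
  have ha0 : ∀ n, 0 ≤ a n := fun n => norm_nonneg _
  -- ‖U φ n‖ = 1
  have hUφ : ∀ n, ‖U (φ n)‖ = 1 := fun n => by
    rw [ContinuousLinearMap.norm_map_of_mem_unitary hU, hφnorm]
  -- Pythagoras: ‖U φ n‖² = ‖P₀ U φ n‖² + ‖U φ n - P₀ U φ n‖²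
  have hadj : ∀ z w : H, (inner ℂ (P₀ z) w : ℂ) = inner ℂ z (P₀ w) := by
    intro z w
    conv_lhs => rw [← hP₀sa.adjoint_eq]
    exact ContinuousLinearMap.adjoint_inner_left P₀ w z
  have hpyth : ∀ y : H, ‖y‖ ^ 2 = ‖P₀ y‖ ^ 2 + ‖y - P₀ y‖ ^ 2 := by
    intro y
    have hPP : P₀ (P₀ y) = P₀ y := by
      have h := hP₀idem
      rw [IsIdempotentElem] at h
      calc P₀ (P₀ y) = (P₀ * P₀) y := rfl
        _ = P₀ y := by rw [h]
    have hinner : (inner ℂ (P₀ y) (y - P₀ y) : ℂ) = 0 := by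
      rw [hadj, map_sub, hPP, sub_self, inner_zero_right]
    have h := norm_add_sq_eq_norm_sq_add_norm_sq_of_inner_eq_zero _ _ hinner
    have hy : ‖y‖ = ‖P₀ y + (y - P₀ y)‖ := by rw [add_sub_cancel]
    rw [hy, pow_two, pow_two, pow_two]
    exact h
  -- ‖P₀ U φ n‖ → 1 by squeeze
  have hnormb : ∀ n, |‖P₀ (U (φ n))‖ - 1| ≤ a n := by
    intro n
    have h1 : ‖e • φ n‖ = 1 := by rw [norm_smul, habs, hφnorm, one_mul]
    calc |‖P₀ (U (φ n))‖ - 1| = |‖P₀ (U (φ n))‖ - ‖e • φ n‖| := by rw [h1]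
      _ ≤ ‖P₀ (U (φ n)) - e • φ n‖ := abs_norm_sub_norm_le _ _
  have htendP : Filter.Tendsto (fun n => ‖P₀ (U (φ n))‖) Filter.atTop (nhds 1) := by
    have h1 : Filter.Tendsto (fun n => ‖P₀ (U (φ n))‖ - 1) Filter.atTop (nhds 0) :=
      squeeze_zero_norm (fun n => by simpa [Real.norm_eq_abs] using hnormb n) htend
    have := h1.add_const 1
    simpa using this
  -- ‖U φ n - P₀ U φ n‖² = 1 - ‖P₀ U φ n‖² → 0
  have htendQ : Filter.Tendsto (fun n => ‖U (φ n) - P₀ (U (φ n))‖) Filter.atTop (nhds 0) := by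
    have hsq : ∀ n, ‖U (φ n) - P₀ (U (φ n))‖ = Real.sqrt (1 - ‖P₀ (U (φ n))‖ ^ 2) := by
      intro n
      have := hpyth (U (φ n))
      rw [hUφ n, one_pow] at this
      rw [show (1:ℝ) - ‖P₀ (U (φ n))‖ ^ 2 = ‖U (φ n) - P₀ (U (φ n))‖ ^ 2 by linarith,
        Real.sqrt_sq (norm_nonneg _)]
    simp only [hsq]
    have : Filter.Tendsto (fun n => Real.sqrt (1 - ‖P₀ (U (φ n))‖ ^ 2)) Filter.atTop
        (nhds (Real.sqrt (1 - 1 ^ 2))) := by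
      apply (Real.continuous_sqrt.tendsto _).comp
      exact (tendsto_const_nhds.sub ((htendP.pow 2)))
    simpa using this
  -- final squeeze
  apply squeeze_zero (g := fun n => ‖U (φ n) - P₀ (U (φ n))‖ + a n) (fun n => norm_nonneg _)
  · intro n
    calc ‖U (φ n) - e • φ n‖
        = ‖(U (φ n) - P₀ (U (φ n))) + (P₀ (U (φ n)) - e • φ n)‖ := by rw [sub_add_sub_cancel]
      _ ≤ ‖U (φ n) - P₀ (U (φ n))‖ + ‖P₀ (U (φ n)) - e • φ n‖ := norm_add_le _ _
      _ = ‖U (φ n) - P₀ (U (φ n))‖ + a n := rfl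
  · simpa using htendQ.add htend
end

section
/- Let T = V(P₁ + gP₂) with V unitary, P₁ + P₂ = I orthogonal projections, 0 < g < 1. If φ ∈ H satisfies Tφ = λφ with |λ| = g, then P₂φ = φ and Vφ = (λ/g)φ. -/
/-- Let T = V(P₁ + gP₂), V unitary, P₁ + P₂ = 1 orthogonal projections,
0 < g < 1. If Tφ = λφ with |λ| = g, then P₂φ = φ and Vφ = (λ/g)φ. -/
theorem stmt_12 {H : Type*} [NormedAddCommGroup H] [InnerProductSpace ℂ H]
    [CompleteSpace H] (V P₁ P₂ : H →L[ℂ] H)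
    (hV : V ∈ unitary (H →L[ℂ] H))
    (hP₁sa : IsSelfAdjoint P₁) (hP₁idem : IsIdempotentElem P₁)
    (hP₂sa : IsSelfAdjoint P₂) (hP₂idem : IsIdempotentElem P₂)
    (hsum : P₁ + P₂ = 1) (g : ℝ) (hg0 : 0 < g) (hg1 : g < 1)
    (φ : H) (lam : ℂ) (hlam : ‖lam‖ = g)
    (h : (V * (P₁ + (g : ℂ) • P₂)) φ = lam • φ) :
    P₂ φ = φ ∧ V φ = (lam / (g : ℂ)) • φ := by
  -- P₁ * P₂ = 0
  have hP1eq : P₁ = 1 - P₂ := eq_sub_of_add_eq hsum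
  have hP12 : P₁ * P₂ = 0 := by
    rw [hP1eq, sub_mul, one_mul, sub_eq_zero]
    exact hP₂idem.symm
  -- orthogonality of P₁ φ and P₂ φ
  have horth : inner ℂ (P₁ φ) (P₂ φ) = (0 : ℂ) := by
    nth_rewrite 1 [← hP₁sa.adjoint_eq]
    rw [ContinuousLinearMap.adjoint_inner_left]
    have : P₁ (P₂ φ) = (P₁ * P₂) φ := rfl
    rw [this, hP12]
    simp
  -- splitting φ
  have hsplit : P₁ φ + P₂ φ = φ := by
    have : (P₁ + P₂) φ = (1 : H →L[ℂ] H) φ := by rw [hsum]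
    simpa using this
  -- norm equation
  have hTphi : (V * (P₁ + (g : ℂ) • P₂)) φ = V (P₁ φ + (g : ℂ) • P₂ φ) := rfl
  have hnorm1 : ‖P₁ φ + (g : ℂ) • P₂ φ‖ = g * ‖φ‖ := by
    have h1 : ‖V (P₁ φ + (g : ℂ) • P₂ φ)‖ = ‖P₁ φ + (g : ℂ) • P₂ φ‖ :=
      V.norm_map_of_mem_unitary hV _
    rw [← h1, ← hTphi, h, norm_smul]
    simp [hlam]
  -- pythagorean identities
  have hpyth1 : ‖P₁ φ + (g : ℂ) • P₂ φ‖ ^ 2 = ‖P₁ φ‖ ^ 2 + g ^ 2 * ‖P₂ φ‖ ^ 2 := by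
    have horth' : inner ℂ (P₁ φ) ((g : ℂ) • P₂ φ) = (0 : ℂ) := by
      rw [inner_smul_right, horth, mul_zero]
    have := norm_add_sq_eq_norm_sq_add_norm_sq_of_inner_eq_zero (P₁ φ) ((g : ℂ) • P₂ φ) horth'
    have hs : ‖(g : ℂ) • P₂ φ‖ = g * ‖P₂ φ‖ := by
      rw [norm_smul]; simp [abs_of_pos hg0]
    rw [hs] at this
    rw [pow_two, this]; ring
  have hpyth2 : ‖φ‖ ^ 2 = ‖P₁ φ‖ ^ 2 + ‖P₂ φ‖ ^ 2 := by
    have := norm_add_sq_eq_norm_sq_add_norm_sq_of_inner_eq_zero (P₁ φ) (P₂ φ) horth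
    rw [hsplit] at this
    rw [pow_two, this]; ring
  have hkey : ‖P₁ φ‖ ^ 2 + g ^ 2 * ‖P₂ φ‖ ^ 2 = g ^ 2 * (‖P₁ φ‖ ^ 2 + ‖P₂ φ‖ ^ 2) := by
    rw [← hpyth1, ← hpyth2, ← mul_pow, ← hnorm1]
  have hP1phi : P₁ φ = 0 := by
    have : (1 - g ^ 2) * ‖P₁ φ‖ ^ 2 = 0 := by linarith
    have hg2 : 1 - g ^ 2 ≠ 0 := by nlinarith
    have := (mul_eq_zero.mp this).resolve_left hg2
    have := pow_eq_zero_iff (n := 2) (by norm_num) |>.mp this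
    exact norm_eq_zero.mp this
  have hP2phi : P₂ φ = φ := by
    conv_rhs => rw [← hsplit, hP1phi, zero_add]
  refine ⟨hP2phi, ?_⟩
  have hgne : (g : ℂ) ≠ 0 := by exact_mod_cast hg0.ne'
  have : V ((g : ℂ) • φ) = lam • φ := by
    rw [← h, hTphi, hP1phi, hP2phi, zero_add]
  rw [map_smul] at this
  rw [div_eq_mul_inv, mul_comm, mul_smul, ← this, inv_smul_smul₀ hgne]
end

section
/- Let V be unitary on H = H₁ ⊕ H₂ (orthogonal decomposition with projections P₁, P₂), write V_{jk} = P_j V P_k as operators H_k → H_j, and let T = V(P₁ + gP₂) with 0 ≤ g < 1. Suppose ‖V₁₁‖ < 1 and set r(V) = ½(‖V₁₁‖ + g‖V₂₂‖ + √((‖V₁₁‖ − g‖V₂₂‖)² + 4g‖V₂₁‖‖V₁₂‖)). Then every z ∈ ℂ with r(V) < |z| ≤ 1 lies in the resolvent set of T. In particular, if g < (1 − ‖V₁₁‖)/(‖V₂₁‖‖V₁₂‖ + ‖V₂₂‖(1 − ‖V₁₁‖)), then r(V) < 1 and the spectral radius of T is strictly less than 1. -/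
open Filter Topology ENNReal NNReal




/-- If `‖T^n‖ ≤ C * s^n` for all `n`, with `‖1‖ ≤ 1`, then the spectral radius of `T`
is at most `s`. -/
lemma aux_spectralRadius_le {A : Type*} [NormedRing A] [NormedAlgebra ℂ A] [CompleteSpace A]
    (T : A) (hone : ‖(1 : A)‖ ≤ 1) (C s : ℝ) (hC : 0 < C) (hs : 0 < s)
    (hpow : ∀ n : ℕ, ‖T ^ n‖ ≤ C * s ^ n) :
    spectralRadius ℂ T ≤ ENNReal.ofReal s := by
  have key : ∀ n : ℕ, spectralRadius ℂ T ≤ ENNReal.ofReal (C ^ ((1:ℝ)/(n+1)) * s) := by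
    intro n
    have he : (0:ℝ) ≤ 1/(n+1) := by positivity
    have hn1 : ((n:ℝ) + 1) ≠ 0 := by positivity
    refine (spectrum.spectralRadius_le_pow_nnnorm_pow_one_div ℂ T n).trans ?_
    have h1 : ((‖(1 : A)‖₊ : ℝ≥0∞)) ^ ((1:ℝ)/(n+1)) ≤ 1 := by
      apply ENNReal.rpow_le_one _ he
      exact_mod_cast (show (‖(1:A)‖₊ : ℝ≥0) ≤ 1 by exact_mod_cast hone)
    calc (‖T ^ (n+1)‖₊ : ℝ≥0∞) ^ ((1:ℝ)/(n+1)) * (‖(1 : A)‖₊ : ℝ≥0∞) ^ ((1:ℝ)/(n+1))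
        ≤ (‖T ^ (n+1)‖₊ : ℝ≥0∞) ^ ((1:ℝ)/(n+1)) * 1 := by
          exact mul_le_mul_right h1 _
      _ = (ENNReal.ofReal ‖T ^ (n+1)‖) ^ ((1:ℝ)/(n+1)) := by
          rw [mul_one, ofReal_norm, enorm_eq_nnnorm]
      _ ≤ (ENNReal.ofReal (C * s ^ (n+1))) ^ ((1:ℝ)/(n+1)) := by
          exact ENNReal.rpow_le_rpow (ENNReal.ofReal_le_ofReal (hpow (n+1))) he
      _ = ENNReal.ofReal ((C * s ^ (n+1)) ^ ((1:ℝ)/(n+1))) := by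
          rw [← ENNReal.ofReal_rpow_of_pos (by positivity)]
      _ = ENNReal.ofReal (C ^ ((1:ℝ)/(n+1)) * s) := by
          congr 1
          rw [Real.mul_rpow hC.le (by positivity), ← Real.rpow_natCast s (n+1),
            ← Real.rpow_mul hs.le]
          push_cast
          rw [mul_one_div, div_self hn1, Real.rpow_one]
  refine ENNReal.le_of_forall_pos_le_add fun ε hε _ => ?_
  have hC1 : Tendsto (fun n : ℕ => C ^ ((1:ℝ)/(n+1))) atTop (𝓝 1) := by
    have h0 : Tendsto (fun n : ℕ => (1:ℝ)/(n+1)) atTop (𝓝 0) :=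
      tendsto_one_div_add_atTop_nhds_zero_nat
    have := ((Real.continuousAt_const_rpow hC.ne').tendsto).comp h0
    simpa [Function.comp_def, Real.rpow_zero] using this
  have hlim : Tendsto (fun n : ℕ => C ^ ((1:ℝ)/(n+1)) * s) atTop (𝓝 s) := by
    simpa using hC1.mul_const s
  have hev : ∀ᶠ n : ℕ in atTop, C ^ ((1:ℝ)/(n+1)) * s ≤ s + ε := by
    apply hlim.eventually (ge_mem_nhds ?_)
    exact lt_add_of_pos_right s (by exact_mod_cast hε)
  obtain ⟨n, hn⟩ := hev.exists
  calc spectralRadius ℂ T ≤ ENNReal.ofReal (C ^ ((1:ℝ)/(n+1)) * s) := key n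
    _ ≤ ENNReal.ofReal (s + ε) := ENNReal.ofReal_le_ofReal hn
    _ = ENNReal.ofReal s + ε := by
        rw [ENNReal.ofReal_add hs.le ε.coe_nonneg, ENNReal.ofReal_coe_nnreal]


/-- Weighted block power bound. -/
lemma aux_pow_bound {A : Type*} [NormedRing A] (T P₁ P₂ : A) (hsum : P₁ + P₂ = 1)
    (hP₁ : P₁ * P₁ = P₁) (hP₂ : P₂ * P₂ = P₂) (hn₁ : ‖P₁‖ ≤ 1) (hn₂ : ‖P₂‖ ≤ 1)
    {t11 t12 t21 t22 u v s C : ℝ}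
    (h11 : ‖P₁ * T * P₁‖ ≤ t11) (h12 : ‖P₁ * T * P₂‖ ≤ t12)
    (h21 : ‖P₂ * T * P₁‖ ≤ t21) (h22 : ‖P₂ * T * P₂‖ ≤ t22)
    (hu : 0 < u) (hv : 0 < v) (hs : 0 ≤ s)
    (hCu : 1 ≤ C * u) (hCv : 1 ≤ C * v) (hC : 0 ≤ C)
    (e1 : t11 * u + t21 * v ≤ s * u) (e2 : t12 * u + t22 * v ≤ s * v) :
    ∀ n : ℕ, ‖T ^ n‖ ≤ (2 * C * (u + v)) * s ^ n := by
  have key : ∀ n : ℕ, u * ‖P₁ * T ^ n‖ + v * ‖P₂ * T ^ n‖ ≤ (u + v) * s ^ n := by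
    intro n
    induction n with
    | zero =>
      simp only [pow_zero, mul_one]
      nlinarith [norm_nonneg P₁, norm_nonneg P₂]
    | succ n ih =>
      set x := ‖P₁ * T ^ n‖ with hx
      set y := ‖P₂ * T ^ n‖ with hy
      have hx0 : 0 ≤ x := norm_nonneg _
      have hy0 : 0 ≤ y := norm_nonneg _
      have d1 : P₁ * T ^ (n+1) = P₁*T*P₁*(P₁*T^n) + P₁*T*P₂*(P₂*T^n) := by
        have e : P₁*T*P₁*(P₁*T^n) + P₁*T*P₂*(P₂*T^n) = P₁*T*(P₁*P₁ + P₂*P₂)*T^n := by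
          noncomm_ring
        rw [e, hP₁, hP₂, hsum, mul_one, pow_succ', ← mul_assoc]
      have d2 : P₂ * T ^ (n+1) = P₂*T*P₁*(P₁*T^n) + P₂*T*P₂*(P₂*T^n) := by
        have e : P₂*T*P₁*(P₁*T^n) + P₂*T*P₂*(P₂*T^n) = P₂*T*(P₁*P₁ + P₂*P₂)*T^n := by
          noncomm_ring
        rw [e, hP₁, hP₂, hsum, mul_one, pow_succ', ← mul_assoc]
      have b1 : ‖P₁ * T ^ (n+1)‖ ≤ t11 * x + t12 * y := by
        rw [d1]
        refine (norm_add_le _ _).trans ?_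
        have := (norm_mul_le (P₁*T*P₁) (P₁*T^n)).trans
          (mul_le_mul_of_nonneg_right h11 hx0)
        have := (norm_mul_le (P₁*T*P₂) (P₂*T^n)).trans
          (mul_le_mul_of_nonneg_right h12 hy0)
        linarith [(norm_mul_le (P₁*T*P₁) (P₁*T^n)).trans (mul_le_mul_of_nonneg_right h11 hx0),
          (norm_mul_le (P₁*T*P₂) (P₂*T^n)).trans (mul_le_mul_of_nonneg_right h12 hy0)]
      have b2 : ‖P₂ * T ^ (n+1)‖ ≤ t21 * x + t22 * y := by
        rw [d2]
        refine (norm_add_le _ _).trans ?_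
        linarith [(norm_mul_le (P₂*T*P₁) (P₁*T^n)).trans (mul_le_mul_of_nonneg_right h21 hx0),
          (norm_mul_le (P₂*T*P₂) (P₂*T^n)).trans (mul_le_mul_of_nonneg_right h22 hy0)]
      have hsn : (0:ℝ) ≤ s ^ n := pow_nonneg hs n
      rw [show s ^ (n+1) = s * s ^ n from by ring]
      nlinarith [mul_le_mul_of_nonneg_left b1 hu.le, mul_le_mul_of_nonneg_left b2 hv.le,
        mul_le_mul_of_nonneg_right e1 hx0, mul_le_mul_of_nonneg_right e2 hy0,
        mul_le_mul_of_nonneg_left ih hs]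
  intro n
  have hk := key n
  have hx0 : 0 ≤ ‖P₁ * T ^ n‖ := norm_nonneg _
  have hy0 : 0 ≤ ‖P₂ * T ^ n‖ := norm_nonneg _
  have hTn : ‖T ^ n‖ ≤ ‖P₁ * T ^ n‖ + ‖P₂ * T ^ n‖ := by
    calc ‖T ^ n‖ = ‖P₁ * T ^ n + P₂ * T ^ n‖ := by
          rw [← add_mul, hsum, one_mul]
      _ ≤ ‖P₁ * T ^ n‖ + ‖P₂ * T ^ n‖ := norm_add_le _ _
  have h1 : ‖P₁ * T ^ n‖ ≤ C * (u * ‖P₁ * T ^ n‖ + v * ‖P₂ * T ^ n‖) := by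
    nlinarith [mul_le_mul_of_nonneg_right hCu hx0, mul_nonneg (mul_nonneg hC hv.le) hy0]
  have h2 : ‖P₂ * T ^ n‖ ≤ C * (u * ‖P₁ * T ^ n‖ + v * ‖P₂ * T ^ n‖) := by
    nlinarith [mul_le_mul_of_nonneg_right hCv hy0, mul_nonneg (mul_nonneg hC hu.le) hx0]
  have := mul_le_mul_of_nonneg_left hk (by positivity : (0:ℝ) ≤ 2 * C)
  nlinarith [mul_le_mul_of_nonneg_left hk hC]


lemma aux_r {t11 t12 t21 t22 r : ℝ} (h11 : 0 ≤ t11) (h12 : 0 ≤ t12) (h21 : 0 ≤ t21)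
    (h22 : 0 ≤ t22)
    (hr : r = (1/2) * (t11 + t22 + Real.sqrt ((t11 - t22)^2 + 4 * t12 * t21))) :
    t11 ≤ r ∧ t22 ≤ r ∧ (r - t11) * (r - t22) = t12 * t21 := by
  set D := Real.sqrt ((t11 - t22)^2 + 4 * t12 * t21) with hD
  have harg : 0 ≤ (t11 - t22)^2 + 4 * t12 * t21 := by positivity
  have hD2 : D^2 = (t11 - t22)^2 + 4 * t12 * t21 := Real.sq_sqrt harg
  have hDabs : |t11 - t22| ≤ D := by
    rw [← Real.sqrt_sq_eq_abs]
    exact Real.sqrt_le_sqrt (by nlinarith [mul_nonneg h12 h21])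
  have h1 := le_abs_self (t11 - t22)
  have h2 := neg_abs_le (t11 - t22)
  refine ⟨by rw [hr]; linarith, by rw [hr]; linarith, ?_⟩
  rw [hr]
  linear_combination (1/4) * hD2


lemma aux_rlt1 {a b c d g r : ℝ} (ha0 : 0 ≤ a) (hb0 : 0 ≤ b) (hc0 : 0 ≤ c) (hd0 : 0 ≤ d)
    (hg0 : 0 ≤ g) (hN : a < 1)
    (hr' : r = (1/2) * (a + g * d + Real.sqrt ((a - g * d)^2 + 4 * (g * b) * c)))
    (hg : g < (1 - a) / (c * b + d * (1 - a))) : r < 1 := by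
  have h1a : 0 < 1 - a := by linarith
  rcases eq_or_lt_of_le (add_nonneg (mul_nonneg hc0 hb0) (mul_nonneg hd0 h1a.le)) with
    hden | hdenpos
  · rw [← hden, _root_.div_zero] at hg
    linarith
  · have hkey : g * (c * b + d * (1 - a)) < 1 - a := (lt_div_iff₀ hdenpos).mp hg
    have hgd : g * d < 1 := by
      by_contra hcon
      push_neg at hcon
      have h0 : 0 ≤ g * (c * b) := mul_nonneg hg0 (mul_nonneg hc0 hb0)
      have h2 := mul_le_mul_of_nonneg_right hcon h1a.le
      linarith [hkey, h0, h2]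
    have hbc : (g * b) * c < (1 - a) * (1 - g * d) := by
      have h0 : 0 ≤ g * (d * a) := mul_nonneg hg0 (mul_nonneg hd0 ha0)
      nlinarith [hkey]
    have h2pos : 0 < 2 - a - g * d := by linarith
    have hD : Real.sqrt ((a - g * d)^2 + 4 * (g * b) * c) < 2 - a - g * d := by
      rw [show (2:ℝ) - a - g * d = Real.sqrt ((2 - a - g * d)^2) from
        (Real.sqrt_sq h2pos.le).symm]
      apply Real.sqrt_lt_sqrt (by positivity)
      nlinarith [hbc]
    rw [hr']
    linarith

/-- Schur complement estimate: for V unitary, P₁+P₂ = 1 orthogonal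
projections, T = V(P₁+gP₂) with 0 ≤ g < 1, writing Vⱼₖ = PⱼVPₖ and assuming
‖V₁₁‖ < 1, every z with r(V) < |z| ≤ 1 is in the resolvent set of T, where
r(V) = ½(‖V₁₁‖+g‖V₂₂‖+√((‖V₁₁‖−g‖V₂₂‖)²+4g‖V₂₁‖‖V₁₂‖)). In particular, if
g < (1−‖V₁₁‖)/(‖V₂₁‖‖V₁₂‖+‖V₂₂‖(1−‖V₁₁‖)) then r(V) < 1 and the spectral
radius of T is strictly less than one. -/
theorem stmt_15 {H : Type*} [NormedAddCommGroup H] [InnerProductSpace ℂ H]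
    [CompleteSpace H] (V P₁ P₂ : H →L[ℂ] H)
    (hV : V ∈ unitary (H →L[ℂ] H))
    (hP₁sa : IsSelfAdjoint P₁) (hP₁idem : IsIdempotentElem P₁)
    (hP₂sa : IsSelfAdjoint P₂) (hP₂idem : IsIdempotentElem P₂)
    (hsum : P₁ + P₂ = 1) (g : ℝ) (hg0 : 0 ≤ g) (hg1 : g < 1)
    (hN11 : ‖P₁ * V * P₁‖ < 1)
    (r : ℝ)
    (hr : r = (1/2) * (‖P₁ * V * P₁‖ + g * ‖P₂ * V * P₂‖ +
      Real.sqrt ((‖P₁ * V * P₁‖ - g * ‖P₂ * V * P₂‖)^2 +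
        4 * g * ‖P₂ * V * P₁‖ * ‖P₁ * V * P₂‖))) :
    (∀ z : ℂ, r < ‖z‖ → ‖z‖ ≤ 1 →
      z ∉ spectrum ℂ (V * (P₁ + (g : ℂ) • P₂))) ∧
    (g < (1 - ‖P₁ * V * P₁‖) /
        (‖P₂ * V * P₁‖ * ‖P₁ * V * P₂‖ + ‖P₂ * V * P₂‖ * (1 - ‖P₁ * V * P₁‖)) →
      r < 1 ∧ spectralRadius ℂ (V * (P₁ + (g : ℂ) • P₂)) < 1) := by
  set T := V * (P₁ + (g : ℂ) • P₂) with hT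
  set a := ‖P₁ * V * P₁‖ with ha
  set b := ‖P₁ * V * P₂‖ with hb
  set c := ‖P₂ * V * P₁‖ with hc
  set d := ‖P₂ * V * P₂‖ with hd
  have ha0 : 0 ≤ a := norm_nonneg _
  have hb0 : 0 ≤ b := norm_nonneg _
  have hc0 : 0 ≤ c := norm_nonneg _
  have hd0 : 0 ≤ d := norm_nonneg _
  clear_value T a b c d
  have hP12 : P₁ * P₂ = 0 := by
    have h2 : P₂ = 1 - P₁ := by rw [← hsum]; abel
    rw [h2, mul_sub, mul_one, hP₁idem.eq, sub_self]
  have hP21 : P₂ * P₁ = 0 := by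
    have h2 : P₂ = 1 - P₁ := by rw [← hsum]; abel
    rw [h2, sub_mul, one_mul, hP₁idem.eq, sub_self]
  have hgnorm : ‖(g : ℂ)‖ = g := by
    rw [Complex.norm_real, Real.norm_eq_abs, abs_of_nonneg hg0]
  have hTP1 : T * P₁ = V * P₁ := by
    have h : (P₁ + (g : ℂ) • P₂) * P₁ = P₁ := by
      rw [add_mul, smul_mul_assoc, hP₁idem.eq, hP21, smul_zero, add_zero]
    rw [hT, mul_assoc, h]
  have hTP2 : T * P₂ = (g : ℂ) • (V * P₂) := by
    have h : (P₁ + (g : ℂ) • P₂) * P₂ = (g : ℂ) • P₂ := by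
      rw [add_mul, smul_mul_assoc, hP₂idem.eq, hP12, zero_add]
    rw [hT, mul_assoc, h, mul_smul_comm]
  have h11 : ‖P₁ * T * P₁‖ = a := by
    rw [mul_assoc, hTP1, ← mul_assoc, ← ha]
  have h21 : ‖P₂ * T * P₁‖ = c := by
    rw [mul_assoc, hTP1, ← mul_assoc, ← hc]
  have h12 : ‖P₁ * T * P₂‖ = g * b := by
    rw [mul_assoc, hTP2, mul_smul_comm, norm_smul, hgnorm, ← mul_assoc, ← hb]
  have h22 : ‖P₂ * T * P₂‖ = g * d := by
    rw [mul_assoc, hTP2, mul_smul_comm, norm_smul, hgnorm, ← mul_assoc, ← hd]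
  have hproj_norm : ∀ P : H →L[ℂ] H, IsSelfAdjoint P → P * P = P → ‖P‖ ≤ 1 := by
    intro P hsa hidem
    have h := CStarRing.norm_star_mul_self (x := P)
    rw [hsa.star_eq, hidem] at h
    nlinarith [norm_nonneg P]
  have hn1 : ‖P₁‖ ≤ 1 := hproj_norm P₁ hP₁sa hP₁idem.eq
  have hn2 : ‖P₂‖ ≤ 1 := hproj_norm P₂ hP₂sa hP₂idem.eq
  have hr' : r = (1/2) * (a + g * d + Real.sqrt ((a - g * d)^2 + 4 * (g * b) * c)) := by
    rw [hr, show (a - g * d)^2 + 4 * g * c * b = (a - g * d)^2 + 4 * (g * b) * c from by ring]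
  obtain ⟨hra, hrd, hprod⟩ := aux_r ha0 (mul_nonneg hg0 hb0) hc0 (mul_nonneg hg0 hd0) hr'
  have hr0 : 0 ≤ r := ha0.trans hra
  have hone : ‖(1 : H →L[ℂ] H)‖ ≤ 1 := by
    rw [ContinuousLinearMap.one_def]; exact ContinuousLinearMap.norm_id_le
  have key : ∀ s : ℝ, r < s → spectralRadius ℂ T ≤ ENNReal.ofReal s := by
    intro s hslt
    have hs0 : 0 < s := lt_of_le_of_lt hr0 hslt
    have hQ : 0 < (s - a) * (s - g * d) - (g * b) * c := by
      have hq1 : 0 ≤ (s - r) * (r - a) :=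
        mul_nonneg (sub_pos.mpr hslt).le (sub_nonneg.mpr hra)
      have hq2 : 0 ≤ (s - r) * (r - g * d) :=
        mul_nonneg (sub_pos.mpr hslt).le (sub_nonneg.mpr hrd)
      have hq3 : 0 < (s - r) * (s - r) :=
        mul_pos (sub_pos.mpr hslt) (sub_pos.mpr hslt)
      linarith [hprod, hq1, hq2, hq3]
    set Q := (s - a) * (s - g * d) - (g * b) * c with hQdef
    have hgb1 : 0 < g * b + 1 := by positivity
    set δ := Q / (g * b + 1) with hδdef
    have hδ : 0 < δ := div_pos hQ hgb1
    have hδe : δ * (g * b + 1) = Q := div_mul_cancel₀ _ hgb1.ne'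
    clear_value Q δ
    set u := c + δ with hu_def
    set v := s - a with hv_def
    have hu : 0 < u := add_pos_of_nonneg_of_pos hc0 hδ
    have hv : 0 < v := sub_pos.mpr (lt_of_le_of_lt hra hslt)
    clear_value u v
    have e1 : a * u + c * v ≤ s * u := by
      rw [hu_def, hv_def]
      linarith [mul_nonneg (sub_nonneg.mpr (hra.trans hslt.le)) hδ.le]
    have e2 : (g * b) * u + (g * d) * v ≤ s * v := by
      have hgbδ : (g * b) * δ = Q - δ := by linear_combination hδe
      rw [hQdef, hv_def] at hgbδ
      rw [hu_def, hv_def]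
      linarith [hδ, hgbδ]
    set C := 1/u + 1/v with hC_def
    have hCu : 1 ≤ C * u := by
      rw [hC_def, add_mul, one_div_mul_cancel hu.ne']
      have : 0 ≤ 1/v * u := by positivity
      linarith
    have hCv : 1 ≤ C * v := by
      rw [hC_def, add_mul, one_div_mul_cancel hv.ne']
      have : 0 ≤ 1/u * v := by positivity
      linarith
    clear_value C
    have hCpos : 0 < C := by
      rw [hC_def]
      exact add_pos (one_div_pos.mpr hu) (one_div_pos.mpr hv)
    have hpow := aux_pow_bound T P₁ P₂ hsum hP₁idem.eq hP₂idem.eq hn1 hn2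
      h11.le h12.le h21.le h22.le hu hv hs0.le hCu hCv hCpos.le e1 e2
    exact aux_spectralRadius_le T hone _ s (mul_pos (mul_pos two_pos hCpos) (add_pos hu hv)) hs0 hpow
  have hsr : spectralRadius ℂ T ≤ ENNReal.ofReal r := by
    refine ENNReal.le_of_forall_pos_le_add fun ε hε _ => ?_
    calc spectralRadius ℂ T ≤ ENNReal.ofReal (r + ε) :=
          key _ (lt_add_of_pos_right r (by exact_mod_cast hε))
      _ = ENNReal.ofReal r + ε := by
          rw [ENNReal.ofReal_add hr0 ε.coe_nonneg, ENNReal.ofReal_coe_nnreal]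
  constructor
  · intro z hz1 _ hzmem
    have h1 : (‖z‖₊ : ℝ≥0∞) ≤ spectralRadius ℂ T :=
      le_iSup₂ (f := fun k (_ : k ∈ spectrum ℂ T) => (‖k‖₊ : ℝ≥0∞)) z hzmem
    have h2 : ENNReal.ofReal ‖z‖ ≤ ENNReal.ofReal r := by
      rw [ofReal_norm, enorm_eq_nnnorm]; exact h1.trans hsr
    have h3 : ‖z‖ ≤ r := (ENNReal.ofReal_le_ofReal_iff hr0).mp h2
    linarith
  · intro hg
    have hr1 : r < 1 := aux_rlt1 ha0 hb0 hc0 hd0 hg0 hN11 hr' hg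
    exact ⟨hr1, lt_of_le_of_lt hsr (ENNReal.ofReal_lt_one.mpr hr1)⟩
end

section
/- Let W be the bounded operator on ℓ²(ℤ) given by the doubly-infinite tridiagonal matrix with zero diagonal, (W e_j , e_{j+1}) entries of constant modulus W₊ and (W e_j, e_{j−1}) entries of constant modulus W₋, where W₊ ≥ W₋ > 0. Then ‖W‖ = W₊ + W₋. Moreover, if W₊ ≤ 1 then every z with |z| < W₊ − W₋ is in the resolvent set of W, and if W₊ > 1 then every z with |z| < (W₊ − W₋)/(2W₊ − 1) is in the resolvent set of W. -/
open scoped ENNReal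

namespace Stmt17Aux

noncomputable def E2 := lp (fun _ : ℤ => ℂ) 2

lemma two_pos' : (0:ℝ) < ((2:ℝ≥0∞)).toReal := by norm_num

lemma mem_shiftMul (c : ℤ → ℂ) (d : ℤ) (C : ℝ) (hc : ∀ k, ‖c k‖ = C)
    (f : lp (fun _ : ℤ => ℂ) 2) :
    Memℓp (fun k : ℤ => c k * f (k + d)) 2 := by
  apply memℓp_gen
  have hf : Summable fun k : ℤ => ‖f k‖ ^ ((2:ℝ≥0∞)).toReal := (lp.memℓp f).summable two_pos'
  have hf2 : Summable fun k : ℤ => C ^ ((2:ℝ≥0∞)).toReal * ‖f (k + d)‖ ^ ((2:ℝ≥0∞)).toReal :=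
    (((Equiv.addRight d).summable_iff (f := fun k : ℤ => ‖f k‖ ^ ((2:ℝ≥0∞)).toReal)).2 hf).mul_left _
  refine hf2.congr fun k => ?_
  rw [norm_mul, Real.mul_rpow (norm_nonneg _) (norm_nonneg _)]
  congr 2
  rw [hc]

noncomputable def mk2 (f : ∀ _ : ℤ, ℂ) (hf : Memℓp f 2) : lp (fun _ : ℤ => ℂ) 2 := ⟨f, hf⟩

@[simp] lemma mk2_apply (f : ∀ _ : ℤ, ℂ) (hf : Memℓp f 2) (k : ℤ) : (mk2 f hf : ∀ _ : ℤ, ℂ) k = f k := rfl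

end Stmt17Aux

namespace Stmt17Aux

lemma norm_shiftMul (c : ℤ → ℂ) (d : ℤ) (C : ℝ) (hC : 0 ≤ C)
    (hc : ∀ k, ‖c k‖ = C) (f : lp (fun _ : ℤ => ℂ) 2) :
    ‖mk2 (fun k : ℤ => c k * f (k + d)) (mem_shiftMul c d C hc f)‖ = C * ‖f‖ := by
  have h1 := lp.hasSum_norm two_pos' (mk2 (fun k : ℤ => c k * f (k + d)) (mem_shiftMul c d C hc f))
  have hf := lp.hasSum_norm two_pos' f
  have hf' : HasSum (fun k : ℤ => ‖f (k + d)‖ ^ ((2:ℝ≥0∞)).toReal)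
      (‖f‖ ^ ((2:ℝ≥0∞)).toReal) :=
    ((Equiv.addRight d).hasSum_iff (f := fun k : ℤ => ‖f k‖ ^ ((2:ℝ≥0∞)).toReal)).2 hf
  have h3 := hf'.mul_left (C ^ ((2:ℝ≥0∞)).toReal)
  rw [← Real.mul_rpow hC (norm_nonneg _)] at h3
  have heq : (fun k : ℤ =>
      ‖(mk2 (fun k : ℤ => c k * f (k + d)) (mem_shiftMul c d C hc f) : ∀ _ : ℤ, ℂ) k‖
        ^ ((2:ℝ≥0∞)).toReal)
      = fun k : ℤ => C ^ ((2:ℝ≥0∞)).toReal * ‖f (k + d)‖ ^ ((2:ℝ≥0∞)).toReal := by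
    funext k
    rw [mk2_apply, norm_mul, Real.mul_rpow (norm_nonneg _) (norm_nonneg _),
      hc]
  rw [heq] at h1
  have h4 := h1.unique h3
  exact Real.rpow_left_injOn (ne_of_gt two_pos') (norm_nonneg _)
    (Set.mem_setOf.2 (mul_nonneg hC (norm_nonneg _))) h4

/-- The bounded operator `f ↦ (k ↦ c k * f (k + d))` on `ℓ²(ℤ)`. -/
noncomputable def shiftMulL (c : ℤ → ℂ) (d : ℤ) (C : ℝ) (hC : 0 ≤ C)
    (hc : ∀ k, ‖c k‖ = C) :
    lp (fun _ : ℤ => ℂ) 2 →L[ℂ] lp (fun _ : ℤ => ℂ) 2 :=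
  LinearMap.mkContinuous
    { toFun := fun f => mk2 (fun k : ℤ => c k * f (k + d)) (mem_shiftMul c d C hc f)
      map_add' := fun f g => lp.ext (funext fun k => by
        simp [mk2, lp.coeFn_add, Pi.add_apply, mul_add]; rfl)
      map_smul' := fun a f => lp.ext (funext fun k => by
        simp [mk2, lp.coeFn_smul, Pi.smul_apply, smul_eq_mul]; ring) }
    C (fun f => le_of_eq (norm_shiftMul c d C hC hc f))

lemma shiftMulL_apply (c : ℤ → ℂ) (d : ℤ) (C : ℝ) (hC : 0 ≤ C)
    (hc : ∀ k, ‖c k‖ = C) (f : lp (fun _ : ℤ => ℂ) 2) (k : ℤ) :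
    (shiftMulL c d C hC hc f : ∀ _ : ℤ, ℂ) k = c k * f (k + d) := rfl

lemma norm_shiftMulL_le (c : ℤ → ℂ) (d : ℤ) (C : ℝ) (hC : 0 ≤ C)
    (hc : ∀ k, ‖c k‖ = C) :
    ‖shiftMulL c d C hC hc‖ ≤ C :=
  LinearMap.mkContinuous_norm_le _ hC _

end Stmt17Aux

namespace Stmt17Aux

lemma single_eq_smul (j : ℤ) (a : ℂ) :
    lp.single (E := fun _ : ℤ => ℂ) 2 j a = a • lp.single 2 j 1 := by
  rw [← lp.single_smul, smul_eq_mul, mul_one]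

lemma single_apply' (i : ℤ) (a : ℂ) (j : ℤ) :
    (lp.single (E := fun _ : ℤ => ℂ) 2 i a : ∀ _ : ℤ, ℂ) j = if j = i then a else 0 := by
  rw [lp.single_apply]
  split_ifs with h
  · subst h; simp
  · simp [h]

lemma shiftMulL_single (c : ℤ → ℂ) (d : ℤ) (C : ℝ) (hC : 0 ≤ C)
    (hc : ∀ k, ‖c k‖ = C) (j : ℤ) (a : ℂ) :
    shiftMulL c d C hC hc (lp.single 2 j a) = lp.single 2 (j - d) (c (j - d) * a) := by
  apply lp.ext
  funext k
  rw [shiftMulL_apply, single_apply', single_apply']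
  by_cases h : k = j - d
  · rw [if_pos (by omega : k + d = j), if_pos h, h]
  · rw [if_neg (by omega : ¬ k + d = j), if_neg h, mul_zero]

/-- Phase chain used to witness the lower bound on the norm. -/
noncomputable def chain (wp wm : ℤ → ℂ) (Wp Wm : ℝ) : ℕ → ℂ
  | 0 => 1
  | 1 => 1
  | (n+2) => ((Wm / Wp : ℝ) : ℂ) * wp n * (wm ((n : ℤ) + 2))⁻¹ * chain wp wm Wp Wm n

lemma abs_chain (wp wm : ℤ → ℂ) (Wp Wm : ℝ) (hWp : 0 < Wp) (hWm : 0 < Wm)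
    (hp : ∀ j, ‖wp j‖ = Wp) (hm : ∀ j, ‖wm j‖ = Wm) :
    ∀ n, ‖chain wp wm Wp Wm n‖ = 1 := by
  have key : ∀ n, ‖chain wp wm Wp Wm n‖ = 1 ∧
      ‖chain wp wm Wp Wm (n+1)‖ = 1 := by
    intro n
    induction n with
    | zero => exact ⟨by simp [chain], by simp [chain]⟩
    | succ k ih =>
      refine ⟨ih.2, ?_⟩
      show ‖chain wp wm Wp Wm (k+2)‖ = 1
      rw [chain, norm_mul, norm_mul, norm_mul, norm_inv, hp, hm, ih.1,
        Complex.norm_real, Real.norm_eq_abs, abs_of_pos (div_pos hWm hWp)]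
      field_simp
  exact fun n => (key n).1

end Stmt17Aux

set_option maxHeartbeats 1000000 in
open Stmt17Aux in
/-- Tridiagonal operator on ℓ²(ℤ) with off-diagonal entries of constant
moduli W₊ ≥ W₋ > 0: its norm is W₊ + W₋, and the disc |z| < W₊ − W₋
(if W₊ ≤ 1), resp. |z| < (W₊ − W₋)/(2W₊ − 1) (if W₊ > 1), lies in its
resolvent set. -/
theorem stmt_17 (W : lp (fun _ : ℤ => ℂ) 2 →L[ℂ] lp (fun _ : ℤ => ℂ) 2)
    (wp wm : ℤ → ℂ) (Wp Wm : ℝ) (hWm : 0 < Wm) (hWpm : Wm ≤ Wp)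
    (hmodp : ∀ j, ‖wp j‖ = Wp)
    (hmodm : ∀ j, ‖wm j‖ = Wm)
    (hact : ∀ j : ℤ, W (lp.single 2 j 1) =
      wp j • lp.single 2 (j + 1) 1 + wm j • lp.single 2 (j - 1) 1) :
    ‖W‖ = Wp + Wm ∧
    (Wp ≤ 1 → ∀ z : ℂ, ‖z‖ < Wp - Wm → z ∉ spectrum ℂ W) ∧
    (1 < Wp → ∀ z : ℂ, ‖z‖ < (Wp - Wm) / (2 * Wp - 1) →
      z ∉ spectrum ℂ W) := by
  have hWp : (0:ℝ) < Wp := hWm.trans_le hWpm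
  set Tp := shiftMulL (fun k => wp (k - 1)) (-1) Wp hWp.le (fun k => hmodp _) with hTp
  set Tm := shiftMulL (fun k => wm (k + 1)) 1 Wm hWm.le (fun k => hmodm _) with hTm
  -- action on singles
  have W_single : ∀ (j : ℤ) (a : ℂ), W (lp.single 2 j a)
      = (wp j * a) • lp.single 2 (j+1) 1 + (wm j * a) • lp.single 2 (j-1) 1 := by
    intro j a
    rw [single_eq_smul, map_smul, hact, smul_add, smul_smul, smul_smul,
      mul_comm a (wp j), mul_comm a (wm j)]
  have Tp_single : ∀ (j : ℤ) (a : ℂ), Tp (lp.single 2 j a)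
      = (wp j * a) • lp.single 2 (j+1) 1 := by
    intro j a
    rw [hTp, shiftMulL_single]
    rw [show j - -1 - 1 = j from by ring, show j - -1 = j + 1 from by ring, single_eq_smul]
  have Tm_single : ∀ (j : ℤ) (a : ℂ), Tm (lp.single 2 j a)
      = (wm j * a) • lp.single 2 (j-1) 1 := by
    intro j a
    rw [hTm, shiftMulL_single]
    rw [show j - 1 + 1 = j from by ring, single_eq_smul]
  -- decomposition
  have hW : W = Tp + Tm := by
    refine ContinuousLinearMap.ext fun f => ?_
    have h1 := (lp.hasSum_single (by norm_num) f).mapL W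
    have h2 := (lp.hasSum_single (by norm_num) f).mapL (Tp + Tm)
    have heq : (fun j : ℤ => W (lp.single 2 j (f j)))
        = fun j : ℤ => (Tp + Tm) (lp.single 2 j (f j)) := by
      funext j
      rw [W_single, ContinuousLinearMap.add_apply, Tp_single, Tm_single]
    rw [heq] at h1
    exact h1.unique h2
  -- upper bound on the norm
  have hnorm_le : ‖W‖ ≤ Wp + Wm := by
    rw [hW]
    exact le_trans (norm_add_le _ _)
      (add_le_add (norm_shiftMulL_le _ _ _ _ _) (norm_shiftMulL_le _ _ _ _ _))
  have hwp_ne : ∀ j, wp j ≠ 0 := fun j h => hWp.ne' (by rw [← hmodp j, h, norm_zero])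
  have hwm_ne : ∀ j, wm j ≠ 0 := fun j h => hWm.ne' (by rw [← hmodm j, h, norm_zero])
  -- the phase chain
  set g : ℤ → ℂ := fun j => chain wp wm Wp Wm j.toNat with hg
  have habs_g : ∀ j : ℤ, ‖g j‖ = 1 := fun j =>
    abs_chain wp wm Wp Wm hWp hWm hmodp hmodm j.toNat
  have hrec : ∀ k : ℤ, 1 ≤ k →
      wm (k+1) * g (k+1) = ((Wm/Wp : ℝ):ℂ) * (wp (k-1) * g (k-1)) := by
    intro k hk
    obtain ⟨n, hn⟩ : ∃ n : ℕ, (n : ℤ) = k - 1 := ⟨(k-1).toNat, Int.toNat_of_nonneg (by omega)⟩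
    have h1 : (k+1).toNat = n + 2 := by omega
    have h2 : (k-1).toNat = n := by omega
    rw [hg]
    beta_reduce
    rw [h1, h2]
    show wm (k+1) * chain wp wm Wp Wm (n+2) = _
    rw [chain]
    have h3 : ((n:ℤ) + 2) = k + 1 := by omega
    rw [h3, hn]
    have hne : wm (k+1) ≠ 0 := hwm_ne _
    rw [show ((Wm/Wp:ℝ):ℂ) * wp (k-1) * (wm (k+1))⁻¹ * chain wp wm Wp Wm n
        = (wm (k+1))⁻¹ * (((Wm/Wp:ℝ):ℂ) * (wp (k-1) * chain wp wm Wp Wm n)) from by ring,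
      ← mul_assoc, mul_inv_cancel₀ hne, one_mul]
  -- lower bound: test vectors
  have hkey : ∀ m : ℕ, ((m:ℝ)+1) * (Wp+Wm)^2 ≤ ‖W‖^2 * ((m:ℝ)+3) := by
    intro m
    set s : Finset ℤ := Finset.Icc (0:ℤ) ((m:ℤ)+2) with hs
    set x : lp (fun _ : ℤ => ℂ) 2 := ∑ j ∈ s, lp.single 2 j (g j) with hx
    have hcard : s.card = m + 3 := by rw [hs, Int.card_Icc]; omega
    have hx_norm : ‖x‖ ^ ((2:ℝ≥0∞)).toReal = (m:ℝ)+3 := by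
      rw [hx, lp.norm_sum_single two_pos']
      have : ∀ j ∈ s, ‖g j‖ ^ ((2:ℝ≥0∞)).toReal = 1 := fun j _ => by
        rw [habs_g, Real.one_rpow]
      rw [Finset.sum_congr rfl this, Finset.sum_const, hcard, nsmul_eq_mul, mul_one]
      push_cast; ring
    have hcoord : ∀ k ∈ Finset.Icc (1:ℤ) ((m:ℤ)+1),
        (W x : ∀ _ : ℤ, ℂ) k = (1 + ((Wm/Wp:ℝ):ℂ)) * (wp (k-1) * g (k-1)) := by
      intro k hk
      rw [Finset.mem_Icc] at hk
      rw [hx, map_sum, lp.coeFn_sum, Finset.sum_apply]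
      have hterm : ∀ j ∈ s, (W (lp.single 2 j (g j)) : ∀ _ : ℤ, ℂ) k
          = (wp j * g j) * (if k = j+1 then 1 else 0)
            + (wm j * g j) * (if k = j-1 then 1 else 0) := by
        intro j _
        rw [W_single, lp.coeFn_add, Pi.add_apply, lp.coeFn_smul, lp.coeFn_smul,
          Pi.smul_apply, Pi.smul_apply, single_apply', single_apply', smul_eq_mul, smul_eq_mul]
      rw [Finset.sum_congr rfl hterm, Finset.sum_add_distrib]
      have e1 : (∑ j ∈ s, (wp j * g j) * (if k = j+1 then 1 else 0)) = wp (k-1) * g (k-1) := by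
        rw [Finset.sum_eq_single (k-1)]
        · rw [if_pos (by ring : k = k-1+1), mul_one]
        · intro j _ hne; rw [if_neg (by omega), mul_zero]
        · intro h; exact absurd (by rw [hs, Finset.mem_Icc]; omega) h
      have e2 : (∑ j ∈ s, (wm j * g j) * (if k = j-1 then 1 else 0)) = wm (k+1) * g (k+1) := by
        rw [Finset.sum_eq_single (k+1)]
        · rw [if_pos (by ring : k = k+1-1), mul_one]
        · intro j _ hne; rw [if_neg (by omega), mul_zero]
        · intro h; exact absurd (by rw [hs, Finset.mem_Icc]; omega) h
      rw [e1, e2, hrec k hk.1]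
      ring
    have habs_coord : ∀ k ∈ Finset.Icc (1:ℤ) ((m:ℤ)+1),
        ‖(W x : ∀ _ : ℤ, ℂ) k‖ = Wp + Wm := by
      intro k hk
      rw [hcoord k hk]
      have hcast : (1 + ((Wm/Wp:ℝ):ℂ)) = (((1 + Wm/Wp : ℝ)):ℂ) := by push_cast; ring
      rw [norm_mul, norm_mul, hcast, Complex.norm_real, Real.norm_eq_abs, hmodp, habs_g,
        abs_of_pos (by positivity : (0:ℝ) < 1 + Wm/Wp)]
      field_simp
    have hsum := lp.sum_rpow_le_norm_rpow two_pos' (W x) (Finset.Icc (1:ℤ) ((m:ℤ)+1))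
    have hlhs : (∑ k ∈ Finset.Icc (1:ℤ) ((m:ℤ)+1), ‖(W x : ∀ _ : ℤ, ℂ) k‖ ^ ((2:ℝ≥0∞)).toReal)
        = ((m:ℝ)+1) * (Wp+Wm) ^ ((2:ℝ≥0∞)).toReal := by
      have : ∀ k ∈ Finset.Icc (1:ℤ) ((m:ℤ)+1),
          ‖(W x : ∀ _ : ℤ, ℂ) k‖ ^ ((2:ℝ≥0∞)).toReal = (Wp+Wm) ^ ((2:ℝ≥0∞)).toReal :=
        fun k hk => by rw [habs_coord k hk]
      rw [Finset.sum_congr rfl this, Finset.sum_const, nsmul_eq_mul, Int.card_Icc]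
      congr 1
      have : ((m:ℤ) + 1 + 1 - 1).toNat = m + 1 := by omega
      rw [this]; push_cast; ring
    have hrhs : ‖W x‖ ^ ((2:ℝ≥0∞)).toReal ≤ ‖W‖ ^ ((2:ℝ≥0∞)).toReal * ((m:ℝ)+3) := by
      rw [← hx_norm, ← Real.mul_rpow (norm_nonneg _) (norm_nonneg _)]
      exact Real.rpow_le_rpow (norm_nonneg _) (W.le_opNorm x) two_pos'.le
    have := (hlhs ▸ hsum).trans hrhs
    rwa [show ((2:ℝ≥0∞)).toReal = (2:ℝ) from by norm_num, Real.rpow_two, Real.rpow_two] at this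
  have hnorm_ge : Wp + Wm ≤ ‖W‖ := by
    have hlim : Filter.Tendsto (fun m : ℕ => (Wp+Wm)^2 * (((m:ℝ)+1) / ((m:ℝ)+3)))
        Filter.atTop (nhds ((Wp+Wm)^2)) := by
      have h1 : Filter.Tendsto (fun m : ℕ => ((m:ℝ)+1) / ((m:ℝ)+3)) Filter.atTop (nhds 1) := by
        have h2 : Filter.Tendsto (fun m : ℕ => ((m:ℝ)+3)) Filter.atTop Filter.atTop :=
          Filter.tendsto_atTop_add_const_right _ 3 tendsto_natCast_atTop_atTop
        have h3 : Filter.Tendsto (fun m : ℕ => 2 / ((m:ℝ)+3)) Filter.atTop (nhds 0) :=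
          Filter.Tendsto.div_atTop tendsto_const_nhds h2
        have heq : (fun m : ℕ => ((m:ℝ)+1) / ((m:ℝ)+3))
            = fun m : ℕ => 1 - 2 / ((m:ℝ)+3) := by
          funext m
          have hm : ((m:ℝ)+3) ≠ 0 := by positivity
          field_simp
          ring
        rw [heq]
        simpa using tendsto_const_nhds.sub h3
      simpa using tendsto_const_nhds.mul h1
    have hle : ∀ m : ℕ, (Wp+Wm)^2 * (((m:ℝ)+1) / ((m:ℝ)+3)) ≤ ‖W‖^2 := by
      intro m
      have hm3 : (0:ℝ) < (m:ℝ)+3 := by positivity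
      calc (Wp+Wm)^2 * (((m:ℝ)+1)/((m:ℝ)+3)) = (((m:ℝ)+1) * (Wp+Wm)^2) / ((m:ℝ)+3) := by ring
        _ ≤ (‖W‖^2 * ((m:ℝ)+3)) / ((m:ℝ)+3) := (div_le_div_iff_of_pos_right hm3).2 (hkey m)
        _ = ‖W‖^2 := mul_div_cancel_right₀ _ hm3.ne'
    have hsq : (Wp+Wm)^2 ≤ ‖W‖^2 := le_of_tendsto hlim (Filter.Eventually.of_forall hle)
    calc Wp + Wm = Real.sqrt ((Wp+Wm)^2) := (Real.sqrt_sq (by positivity)).symm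
      _ ≤ Real.sqrt (‖W‖^2) := Real.sqrt_le_sqrt hsq
      _ = ‖W‖ := Real.sqrt_sq (norm_nonneg _)
  -- resolvent estimate
  have hres : ∀ z : ℂ, ‖z‖ + Wm < Wp → z ∉ spectrum ℂ W := by
    intro z hz
    rw [spectrum.notMem_iff]
    set Sp := shiftMulL (fun k => (wp k)⁻¹) 1 Wp⁻¹ (inv_nonneg.2 hWp.le)
      (fun k => by rw [norm_inv, hmodp]) with hSp
    have hPS : Tp * Sp = 1 := by
      refine ContinuousLinearMap.ext fun f => ?_
      rw [ContinuousLinearMap.mul_apply, ContinuousLinearMap.one_apply]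
      refine lp.ext (funext fun k => ?_)
      rw [hTp, shiftMulL_apply, hSp, shiftMulL_apply]
      beta_reduce
      rw [show k + -1 = k - 1 from by ring, show k - 1 + 1 = k from by ring,
        ← mul_assoc, mul_inv_cancel₀ (hwp_ne _), one_mul]
    have hSP : Sp * Tp = 1 := by
      refine ContinuousLinearMap.ext fun f => ?_
      rw [ContinuousLinearMap.mul_apply, ContinuousLinearMap.one_apply]
      refine lp.ext (funext fun k => ?_)
      rw [hSp, shiftMulL_apply, hTp, shiftMulL_apply]
      beta_reduce
      rw [show k + 1 - 1 = k from by ring, show k + 1 + -1 = k from by ring,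
        ← mul_assoc, inv_mul_cancel₀ (hwp_ne _), one_mul]
    have hU : IsUnit Tp := ⟨⟨Tp, Sp, hPS, hSP⟩, rfl⟩
    have hA : ‖algebraMap ℂ (lp (fun _ : ℤ => ℂ) 2 →L[ℂ] lp (fun _ : ℤ => ℂ) 2) z - Tm‖
        ≤ ‖z‖ + Wm := by
      refine (norm_sub_le _ _).trans (add_le_add ?_ ?_)
      · have hD : algebraMap ℂ (lp (fun _ : ℤ => ℂ) 2 →L[ℂ] lp (fun _ : ℤ => ℂ) 2) z
            = shiftMulL (fun _ => z) 0 (‖z‖) (norm_nonneg z) (fun _ => rfl) := by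
          refine ContinuousLinearMap.ext fun f => ?_
          rw [Algebra.algebraMap_eq_smul_one, ContinuousLinearMap.smul_apply,
            ContinuousLinearMap.one_apply]
          refine lp.ext (funext fun k => ?_)
          rw [shiftMulL_apply, lp.coeFn_smul, Pi.smul_apply, smul_eq_mul, add_zero]
        rw [hD]
        exact norm_shiftMulL_le _ _ _ _ _
      · rw [hTm]; exact norm_shiftMulL_le _ _ _ _ _
    have hlt : ‖Sp * (algebraMap ℂ _ z - Tm)‖ < 1 := by
      calc ‖Sp * (algebraMap ℂ _ z - Tm)‖ ≤ ‖Sp‖ * ‖algebraMap ℂ _ z - Tm‖ := norm_mul_le _ _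
        _ ≤ Wp⁻¹ * (‖z‖ + Wm) := by
            refine mul_le_mul ?_ hA (norm_nonneg _) (by positivity)
            rw [hSp]; exact norm_shiftMulL_le _ _ _ _ _
        _ < 1 := by
            rw [inv_mul_eq_div, div_lt_one hWp]
            exact hz
    have key : algebraMap ℂ _ z - W = (-Tp) * (1 - Sp * (algebraMap ℂ _ z - Tm)) := by
      have h5 : (-Tp) * (1 - Sp * (algebraMap ℂ _ z - Tm))
          = -(Tp * 1) + (Tp * Sp) * (algebraMap ℂ _ z - Tm) := by noncomm_ring
      rw [h5, hPS, one_mul, mul_one, hW]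
      abel
    rw [key]
    exact (hU.neg).mul (isUnit_one_sub_of_norm_lt_one hlt)
  refine ⟨le_antisymm hnorm_le hnorm_ge, ?_, ?_⟩
  · intro h1 z hz
    exact hres z (by linarith)
  · intro h1 z hz
    apply hres z
    have h2 : (Wp - Wm)/(2*Wp - 1) ≤ Wp - Wm := div_le_self (by linarith) (by linarith)
    linarith
end
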